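/- Let U ⊆ ℝ⁴ be open and convex with coordinates (u,v,x,y), let H : U → ℝ be smooth with ∂_u H = 0, and let ξ_ℓ, ξ_n : U → ℝ, ξ_m : U → ℂ (with ξ_m̄ := conjugate of ξ_m) be smooth and satisfy the residual radiation-gauge conditions (∂_u ξ_ℓ = 0; ∂_u ξ_m̄ = ∂_ζ ξ_ℓ; ∂_u ξ_m = ∂_ζ̄ ξ_ℓ; ∂_u ξ_n = −∂_v ξ_ℓ; ∂_ζ̄ ξ_m̄ + ∂_ζ ξ_m = 0). Define K_m̄m̄ := −2 ∂_ζ ξ_m̄, K_nm̄ := (∂_v − (H/2)∂_u)ξ_m̄ + (1/2)(∂_ζ H)ξ_ℓ − ∂_ζ ξ_n, K_nn := 2(∂_v − (H/2)∂_u)ξ_n + (∂_ζ H)ξ_m + (∂_ζ̄ H)ξ_m̄, and η := (i/2)·u²·∂_ζ̄² K_m̄m̄. Then: (i) ∂_u² K_nn = 0, ∂_u ∂_ζ̄ K_nm̄ = 0, and ∂_u(∂_ζ̄² K_m̄m̄) = 0; (ii) if g₀, g₁ : U → ℂ are smooth with ∂_u g₀ = K_m̄m̄, ∂_u g₁ −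 ∂_ζ̄ g₀ = 2 K_nm̄, and ∂_ζ̄ g₁ = −((1/2)K_nn + i η), then ∂_u³ g₀ = 0, ∂_ζ̄ ∂_u² g₀ = 0, and ∂_u³ g₁ = 0. -/

import Mathlib

/- Coordinates (u,v,x,y) = indices (0,1,2,3) on ℝ⁴;
   ζ = (x+iy)/√2, ∂_ζ = (∂_x − i∂_y)/√2, ∂_ζ̄ = (∂_x + i∂_y)/√2. -/

noncomputable section

abbrev V4 : Type := Fin 4 → ℝ

/-- Partial derivative of a complex-valued function in coordinate direction `i`. -/
def pdC (i : Fin 4) (f : V4 → ℂ) : V4 → ℂ :=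
  fun x => fderiv ℝ f x (Pi.single i 1)

/-- Partial derivative of a real-valued function in coordinate direction `i`. -/
def pdR (i : Fin 4) (f : V4 → ℝ) : V4 → ℝ :=
  fun x => fderiv ℝ f x (Pi.single i 1)

/-- Wirtinger derivative ∂_ζ = (∂_x - i ∂_y)/√2. -/
def pdZ (f : V4 → ℂ) : V4 → ℂ :=
  fun x => (pdC 2 f x - Complex.I * pdC 3 f x) / (Real.sqrt 2 : ℂ)

/-- Wirtinger derivative ∂_ζ̄ = (∂_x + i ∂_y)/√2. -/
def pdZb (f : V4 → ℂ) : V4 → ℂ :=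
  fun x => (pdC 2 f x + Complex.I * pdC 3 f x) / (Real.sqrt 2 : ℂ)

/-- The coordinate function ζ = (x+iy)/√2. -/
def zeta (x : V4) : ℂ := ((x 2 : ℂ) + Complex.I * (x 3 : ℂ)) / (Real.sqrt 2 : ℂ)

/-- The coordinate function ζ̄ = (x−iy)/√2. -/
def zbar (x : V4) : ℂ := ((x 2 : ℂ) - Complex.I * (x 3 : ℂ)) / (Real.sqrt 2 : ℂ)

/-- Gauge-operator component K_m̄m̄ = −2∂_ζ ξ_m̄. -/
def Kmm (ξm : V4 → ℂ) : V4 → ℂ :=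
  fun x => -2 * pdZ (fun y => (starRingEnd ℂ) (ξm y)) x

/-- Gauge-operator component
K_nm̄ = (∂_v − (H/2)∂_u)ξ_m̄ + (1/2)(∂_ζ H)ξ_ℓ − ∂_ζ ξ_n. -/
def Knm (H : V4 → ℝ) (ξl ξn : V4 → ℝ) (ξm : V4 → ℂ) : V4 → ℂ :=
  fun x => pdC 1 (fun y => (starRingEnd ℂ) (ξm y)) x
    - ((H x : ℂ) / 2) * pdC 0 (fun y => (starRingEnd ℂ) (ξm y)) x
    + (1/2) * pdZ (fun y => (H y : ℂ)) x * (ξl x : ℂ)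
    - pdZ (fun y => (ξn y : ℂ)) x

/-- Gauge-operator component
K_nn = 2(∂_v − (H/2)∂_u)ξ_n + (∂_ζ H)ξ_m + (∂_ζ̄ H)ξ_m̄. -/
def Knn (H : V4 → ℝ) (ξl ξn : V4 → ℝ) (ξm : V4 → ℂ) : V4 → ℂ :=
  fun x => 2 * (pdC 1 (fun y => (ξn y : ℂ)) x
      - ((H x : ℂ) / 2) * pdC 0 (fun y => (ξn y : ℂ)) x)
    + pdZ (fun y => (H y : ℂ)) x * ξm x
    + pdZb (fun y => (H y : ℂ)) x * (starRingEnd ℂ) (ξm x)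

/-- The auxiliary scalar η = (i/2)·u²·∂_ζ̄² K_m̄m̄. -/
def etaK (ξm : V4 → ℂ) : V4 → ℂ :=
  fun x => (Complex.I / 2) * ((x 0 : ℂ))^2 * pdZb (pdZb (Kmm ξm)) x

/-! Differentiating the residual gauge conditions in `u` gives `∂_u K_m̄m̄ = −2 ∂_ζ² ξ_ℓ`,
`∂_u K_nm̄ = 2 ∂_ζ ∂_v ξ_ℓ` and `∂_u K_nn = −2 ∂_v² ξ_ℓ + (∂_ζ H) ∂_ζ̄ ξ_ℓ + (∂_ζ̄ H) ∂_ζ ξ_ℓ`,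
which are `u`-independent because `ξ_ℓ` and `H` are. Applying `∂_u` to the last gauge condition
shows that `ξ_ℓ` is harmonic in the transverse plane, `∂_ζ̄ ∂_ζ ξ_ℓ = 0`, which kills the remaining
`∂_ζ̄`-derivatives. For the potential, `∂_u² g₀ = ∂_u K_m̄m̄` and
`∂_u² g₁ = 2 ∂_u K_nm̄ + ∂_ζ̄ K_m̄m̄`. Throughout, the partial derivatives commute by the symmetry
of second derivatives of smooth functions.
-/

open scoped ContDiff

theorem ContDiffOn.differentiableAt_of_isOpen {E F : Type*} [NormedAddCommGroup E]
    [NormedSpace ℝ E] [NormedAddCommGroup F] [NormedSpace ℝ F] {f : E → F} {s : Set E} {x : E}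
    {n : WithTop ℕ∞} (hf : ContDiffOn ℝ n f s) (hs : IsOpen s) (hx : x ∈ s) (hn : n ≠ 0) :
    DifferentiableAt ℝ f x :=
  (hf.differentiableOn hn).differentiableAt (hs.mem_nhds hx)

theorem ContDiffOn.ofReal {E : Type*} [NormedAddCommGroup E] [NormedSpace ℝ E] {f : E → ℝ}
    {s : Set E} {n : WithTop ℕ∞} (hf : ContDiffOn ℝ n f s) :
    ContDiffOn ℝ n (fun y => (f y : ℂ)) s :=
  Complex.ofRealCLM.contDiff.comp_contDiffOn hf

theorem ContDiffOn.conj {E : Type*} [NormedAddCommGroup E] [NormedSpace ℝ E] {f : E → ℂ}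
    {s : Set E} {n : WithTop ℕ∞} (hf : ContDiffOn ℝ n f s) :
    ContDiffOn ℝ n (fun y => starRingEnd ℂ (f y)) s :=
  Complex.conjCLE.toContinuousLinearMap.contDiff.comp_contDiffOn hf

section PartialDerivatives

variable {U : Set V4} {f g : V4 → ℂ} {x : V4}

theorem pdC_congr (hU : IsOpen U) (h : ∀ y ∈ U, f y = g y) (hx : x ∈ U) (i : Fin 4) :
    pdC i f x = pdC i g x := by
  simp only [pdC, (Filter.eventuallyEq_of_mem (hU.mem_nhds hx) h).fderiv_eq]

theorem pdC_const (c : ℂ) (i : Fin 4) : pdC i (fun _ => c) x = 0 := by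
  simp [pdC]

theorem pdC_eq_zero_of_eq_zero_on (hU : IsOpen U) (h : ∀ y ∈ U, f y = 0) (hx : x ∈ U)
    (i : Fin 4) : pdC i f x = 0 :=
  (pdC_congr hU h hx i).trans (pdC_const 0 i)

theorem pdC_add (hf : DifferentiableAt ℝ f x) (hg : DifferentiableAt ℝ g x) (i : Fin 4) :
    pdC i (fun y => f y + g y) x = pdC i f x + pdC i g x := by
  simp [pdC, fderiv_fun_add hf hg]

theorem pdC_sub (hf : DifferentiableAt ℝ f x) (hg : DifferentiableAt ℝ g x) (i : Fin 4) :
    pdC i (fun y => f y - g y) x = pdC i f x - pdC i g x := by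
  simp [pdC, fderiv_fun_sub hf hg]

theorem pdC_mul (hf : DifferentiableAt ℝ f x) (hg : DifferentiableAt ℝ g x) (i : Fin 4) :
    pdC i (fun y => f y * g y) x = pdC i f x * g x + f x * pdC i g x := by
  simp [pdC, fderiv_fun_mul hf hg]; ring

theorem pdC_neg (i : Fin 4) : pdC i (fun y => -f y) x = -pdC i f x := by
  simp [pdC]

theorem pdC_const_mul (hf : DifferentiableAt ℝ f x) (c : ℂ) (i : Fin 4) :
    pdC i (fun y => c * f y) x = c * pdC i f x := by
  simp [pdC, fderiv_const_mul hf c]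

theorem pdC_div_const (hf : DifferentiableAt ℝ f x) (c : ℂ) (i : Fin 4) :
    pdC i (fun y => f y / c) x = pdC i f x / c := by
  simp only [div_eq_mul_inv, mul_comm _ c⁻¹, pdC_const_mul hf]

theorem pdC_ofReal {f : V4 → ℝ} (hf : DifferentiableAt ℝ f x) (i : Fin 4) :
    pdC i (fun y => (f y : ℂ)) x = pdR i f x := by
  have h : HasFDerivAt (fun y => (f y : ℂ)) (Complex.ofRealCLM.comp (fderiv ℝ f x)) x :=
    Complex.ofRealCLM.hasFDerivAt.comp x hf.hasFDerivAt
  simp [pdC, pdR, h.fderiv]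

theorem ContDiffOn.pdC (hf : ContDiffOn ℝ ∞ f U) (hU : IsOpen U) (i : Fin 4) :
    ContDiffOn ℝ ∞ (pdC i f) U :=
  (hf.fderiv_of_isOpen hU le_rfl).clm_apply contDiffOn_const

theorem pdC_comm (hU : IsOpen U) (hf : ContDiffOn ℝ ∞ f U) (hx : x ∈ U) (i j : Fin 4) :
    pdC i (pdC j f) x = pdC j (pdC i f) x := by
  have hd : DifferentiableAt ℝ (fderiv ℝ f) x :=
    (hf.fderiv_of_isOpen hU (m := ∞) le_rfl).differentiableAt_of_isOpen hU hx (by simp)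
  have hsymm := (hf.contDiffAt (hU.mem_nhds hx)).isSymmSndFDerivAt (n := ∞)
    (by simpa [minSmoothness_of_isRCLikeNormedField] using ENat.LEInfty.out)
  change fderiv ℝ (fun y => fderiv ℝ f y (Pi.single j 1)) x (Pi.single i 1)
    = fderiv ℝ (fun y => fderiv ℝ f y (Pi.single i 1)) x (Pi.single j 1)
  simp [fderiv_clm_apply hd (differentiableAt_const _), hsymm (Pi.single i 1)]

end PartialDerivatives

section Wirtinger

variable {U : Set V4} {f g : V4 → ℂ} {x : V4}

theorem ContDiffOn.pdZ (hf : ContDiffOn ℝ ∞ f U) (hU : IsOpen U) : ContDiffOn ℝ ∞ (pdZ f) U :=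
  (((hf.pdC hU 2).sub (contDiffOn_const.mul (hf.pdC hU 3)))).div_const _

theorem ContDiffOn.pdZb (hf : ContDiffOn ℝ ∞ f U) (hU : IsOpen U) : ContDiffOn ℝ ∞ (pdZb f) U :=
  (((hf.pdC hU 2).add (contDiffOn_const.mul (hf.pdC hU 3)))).div_const _

theorem pdZ_congr (hU : IsOpen U) (h : ∀ y ∈ U, f y = g y) (hx : x ∈ U) : pdZ f x = pdZ g x := by
  simp only [pdZ, pdC_congr hU h hx]

theorem pdZb_congr (hU : IsOpen U) (h : ∀ y ∈ U, f y = g y) (hx : x ∈ U) :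
    pdZb f x = pdZb g x := by
  simp only [pdZb, pdC_congr hU h hx]

theorem pdZ_eq_zero_of_eq_zero_on (hU : IsOpen U) (h : ∀ y ∈ U, f y = 0) (hx : x ∈ U) :
    pdZ f x = 0 := by
  simp [pdZ, pdC_eq_zero_of_eq_zero_on hU h hx]

theorem pdZb_eq_zero_of_eq_zero_on (hU : IsOpen U) (h : ∀ y ∈ U, f y = 0) (hx : x ∈ U) :
    pdZb f x = 0 := by
  simp [pdZb, pdC_eq_zero_of_eq_zero_on hU h hx]

theorem pdZb_const_mul (hf : DifferentiableAt ℝ f x) (c : ℂ) :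
    pdZb (fun y => c * f y) x = c * pdZb f x := by
  simp only [pdZb, pdC_const_mul hf]; ring

theorem pdC_pdZ_comm (hU : IsOpen U) (hf : ContDiffOn ℝ ∞ f U) (hx : x ∈ U) (i : Fin 4) :
    pdC i (pdZ f) x = pdZ (pdC i f) x := by
  have hd (j : Fin 4) : DifferentiableAt ℝ (pdC j f) x :=
    (hf.pdC hU j).differentiableAt_of_isOpen hU hx (by simp)
  unfold pdZ
  simp (disch := fun_prop) only [pdC_div_const, pdC_sub, pdC_const_mul, pdC_comm hU hf hx i]

theorem pdC_pdZb_comm (hU : IsOpen U) (hf : ContDiffOn ℝ ∞ f U) (hx : x ∈ U) (i : Fin 4) :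
    pdC i (pdZb f) x = pdZb (pdC i f) x := by
  have hd (j : Fin 4) : DifferentiableAt ℝ (pdC j f) x :=
    (hf.pdC hU j).differentiableAt_of_isOpen hU hx (by simp)
  unfold pdZb
  simp (disch := fun_prop) only [pdC_div_const, pdC_add, pdC_const_mul, pdC_comm hU hf hx i]

theorem pdZ_pdZb_comm (hU : IsOpen U) (hf : ContDiffOn ℝ ∞ f U) (hx : x ∈ U) :
    pdZ (pdZb f) x = pdZb (pdZ f) x := by
  simp only [pdZ, pdZb, pdC_pdZb_comm hU hf hx, pdC_pdZ_comm hU hf hx, pdC_comm hU hf hx 2 3]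
  ring

end Wirtinger

section Vanishing

variable {U : Set V4} {f : V4 → ℂ} {i : Fin 4}

theorem pdC_ofReal_eq_zero {f : V4 → ℝ} (hU : IsOpen U) (hf : ContDiffOn ℝ ∞ f U)
    (h : ∀ x ∈ U, pdR i f x = 0) : ∀ x ∈ U, pdC i (fun y => (f y : ℂ)) x = 0 := fun x hx => by
  rw [pdC_ofReal (hf.differentiableAt_of_isOpen hU hx (by simp)), h x hx, Complex.ofReal_zero]

theorem pdC_pdC_eq_zero (hU : IsOpen U) (hf : ContDiffOn ℝ ∞ f U) (h : ∀ x ∈ U, pdC i f x = 0)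
    (j : Fin 4) : ∀ x ∈ U, pdC i (pdC j f) x = 0 := fun _ hx =>
  (pdC_comm hU hf hx i j).trans (pdC_eq_zero_of_eq_zero_on hU h hx j)

theorem pdC_pdZ_eq_zero (hU : IsOpen U) (hf : ContDiffOn ℝ ∞ f U) (h : ∀ x ∈ U, pdC i f x = 0) :
    ∀ x ∈ U, pdC i (pdZ f) x = 0 := fun _ hx =>
  (pdC_pdZ_comm hU hf hx i).trans (pdZ_eq_zero_of_eq_zero_on hU h hx)

theorem pdC_pdZb_eq_zero (hU : IsOpen U) (hf : ContDiffOn ℝ ∞ f U)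
    (h : ∀ x ∈ U, pdC i f x = 0) : ∀ x ∈ U, pdC i (pdZb f) x = 0 := fun _ hx =>
  (pdC_pdZb_comm hU hf hx i).trans (pdZb_eq_zero_of_eq_zero_on hU h hx)

end Vanishing

structure IsResidualRadiationGauge (U : Set V4) (ξl ξn : V4 → ℝ) (ξm : V4 → ℂ) : Prop where
  contDiffOn_l : ContDiffOn ℝ ∞ ξl U
  contDiffOn_n : ContDiffOn ℝ ∞ ξn U
  contDiffOn_m : ContDiffOn ℝ ∞ ξm U
  pdR_zero_l : ∀ x ∈ U, pdR 0 ξl x = 0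
  pdC_zero_conj_m : ∀ x ∈ U, pdC 0 (fun y => starRingEnd ℂ (ξm y)) x = pdZ (fun y => (ξl y : ℂ)) x
  pdC_zero_m : ∀ x ∈ U, pdC 0 ξm x = pdZb (fun y => (ξl y : ℂ)) x
  pdR_zero_n : ∀ x ∈ U, pdR 0 ξn x = -pdR 1 ξl x
  pdZb_conj_m_add_pdZ_m : ∀ x ∈ U, pdZb (fun y => starRingEnd ℂ (ξm y)) x + pdZ ξm x = 0

namespace IsResidualRadiationGauge

variable {U : Set V4} {H ξl ξn : V4 → ℝ} {ξm : V4 → ℂ}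

theorem pdC_zero_l_eq_zero (hξ : IsResidualRadiationGauge U ξl ξn ξm) (hU : IsOpen U) :
    ∀ x ∈ U, pdC 0 (fun y => (ξl y : ℂ)) x = 0 :=
  pdC_ofReal_eq_zero hU hξ.contDiffOn_l hξ.pdR_zero_l

theorem pdC_zero_n (hξ : IsResidualRadiationGauge U ξl ξn ξm) (hU : IsOpen U) :
    ∀ x ∈ U, pdC 0 (fun y => (ξn y : ℂ)) x = -pdC 1 (fun y => (ξl y : ℂ)) x := fun x hx => by
  rw [pdC_ofReal (hξ.contDiffOn_n.differentiableAt_of_isOpen hU hx (by simp)),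
    pdC_ofReal (hξ.contDiffOn_l.differentiableAt_of_isOpen hU hx (by simp)), hξ.pdR_zero_n x hx,
    Complex.ofReal_neg]

theorem pdZb_pdZ_l_eq_zero (hξ : IsResidualRadiationGauge U ξl ξn ξm) (hU : IsOpen U) :
    ∀ x ∈ U, pdZb (pdZ (fun y => (ξl y : ℂ))) x = 0 := fun x hx => by
  have hmb := hξ.contDiffOn_m.conj
  have h := pdC_eq_zero_of_eq_zero_on hU hξ.pdZb_conj_m_add_pdZ_m hx 0
  rw [pdC_add ((hmb.pdZb hU).differentiableAt_of_isOpen hU hx (by simp))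
      ((hξ.contDiffOn_m.pdZ hU).differentiableAt_of_isOpen hU hx (by simp)),
    pdC_pdZb_comm hU hmb hx, pdC_pdZ_comm hU hξ.contDiffOn_m hx,
    pdZb_congr hU hξ.pdC_zero_conj_m hx, pdZ_congr hU hξ.pdC_zero_m hx,
    pdZ_pdZb_comm hU hξ.contDiffOn_l.ofReal hx] at h
  linear_combination h / 2

theorem pdC_zero_Kmm (hξ : IsResidualRadiationGauge U ξl ξn ξm) (hU : IsOpen U) :
    ∀ x ∈ U, pdC 0 (Kmm ξm) x = -2 * pdZ (pdZ (fun y => (ξl y : ℂ))) x := fun x hx => by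
  have hmb := hξ.contDiffOn_m.conj
  unfold Kmm
  rw [pdC_const_mul ((hmb.pdZ hU).differentiableAt_of_isOpen hU hx (by simp)),
    pdC_pdZ_comm hU hmb hx, pdZ_congr hU hξ.pdC_zero_conj_m hx]

theorem pdC_zero_Knm (hξ : IsResidualRadiationGauge U ξl ξn ξm) (hU : IsOpen U)
    (hH : ContDiffOn ℝ ∞ H U) (hHu : ∀ x ∈ U, pdR 0 H x = 0) :
    ∀ x ∈ U, pdC 0 (Knm H ξl ξn ξm) x = 2 * pdZ (pdC 1 (fun y => (ξl y : ℂ))) x := fun x hx => by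
  have hl := hξ.contDiffOn_l.ofReal
  have hn := hξ.contDiffOn_n.ofReal
  have hmb := hξ.contDiffOn_m.conj
  have hHc := hH.ofReal
  have d {f : V4 → ℂ} (hf : ContDiffOn ℝ ∞ f U) : DifferentiableAt ℝ f x :=
    hf.differentiableAt_of_isOpen hU hx (by simp)
  -- atoms for the `fun_prop` discharger below
  have := d hl; have := d hHc; have := d (hHc.pdZ hU); have := d (hn.pdZ hU)
  have := d (hmb.pdC hU 0); have := d (hmb.pdC hU 1)
  have hmb_uu : pdC 0 (pdC 0 (fun y => starRingEnd ℂ (ξm y))) x = 0 := by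
    rw [pdC_congr hU hξ.pdC_zero_conj_m hx]
    exact pdC_pdZ_eq_zero hU hl (hξ.pdC_zero_l_eq_zero hU) x hx
  have hmb_uv : pdC 0 (pdC 1 (fun y => starRingEnd ℂ (ξm y))) x
      = pdZ (pdC 1 (fun y => (ξl y : ℂ))) x := by
    rw [pdC_comm hU hmb hx, pdC_congr hU hξ.pdC_zero_conj_m hx, pdC_pdZ_comm hU hl hx]
  have hn_u : pdC 0 (pdZ (fun y => (ξn y : ℂ))) x = -pdZ (pdC 1 (fun y => (ξl y : ℂ))) x := by
    rw [pdC_pdZ_comm hU hn hx, pdZ_congr hU (hξ.pdC_zero_n hU) hx]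
    simp only [pdZ, pdC_neg]; ring
  unfold Knm
  simp (disch := fun_prop) only [pdC_add, pdC_sub, pdC_mul, pdC_div_const, pdC_const]
  have hHu' := pdC_ofReal_eq_zero hU hH hHu
  rw [hmb_uu, hmb_uv, hn_u, hξ.pdC_zero_l_eq_zero hU x hx, hHu' x hx,
    pdC_pdZ_eq_zero hU hHc hHu' x hx]
  ring

theorem pdC_zero_Knn (hξ : IsResidualRadiationGauge U ξl ξn ξm) (hU : IsOpen U)
    (hH : ContDiffOn ℝ ∞ H U) (hHu : ∀ x ∈ U, pdR 0 H x = 0) :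
    ∀ x ∈ U, pdC 0 (Knn H ξl ξn ξm) x = -2 * pdC 1 (pdC 1 (fun y => (ξl y : ℂ))) x
      + pdZ (fun y => (H y : ℂ)) x * pdZb (fun y => (ξl y : ℂ)) x
      + pdZb (fun y => (H y : ℂ)) x * pdZ (fun y => (ξl y : ℂ)) x := fun x hx => by
  have hl := hξ.contDiffOn_l.ofReal
  have hn := hξ.contDiffOn_n.ofReal
  have hHc := hH.ofReal
  have d {f : V4 → ℂ} (hf : ContDiffOn ℝ ∞ f U) : DifferentiableAt ℝ f x :=
    hf.differentiableAt_of_isOpen hU hx (by simp)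
  have := d hξ.contDiffOn_m; have := d hξ.contDiffOn_m.conj; have := d hHc
  have := d (hHc.pdZ hU); have := d (hHc.pdZb hU)
  have := d (hn.pdC hU 0); have := d (hn.pdC hU 1)
  have hHu' := pdC_ofReal_eq_zero hU hH hHu
  have hn_uv : pdC 0 (pdC 1 (fun y => (ξn y : ℂ))) x = -pdC 1 (pdC 1 (fun y => (ξl y : ℂ))) x := by
    rw [pdC_comm hU hn hx, pdC_congr hU (hξ.pdC_zero_n hU) hx, pdC_neg]
  have hn_uu : pdC 0 (pdC 0 (fun y => (ξn y : ℂ))) x = 0 := by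
    rw [pdC_congr hU (hξ.pdC_zero_n hU) hx, pdC_neg,
      pdC_pdC_eq_zero hU hl (hξ.pdC_zero_l_eq_zero hU) 1 x hx, neg_zero]
  unfold Knn
  simp (disch := fun_prop) only [pdC_add, pdC_sub, pdC_mul, pdC_div_const, pdC_const]
  rw [hn_uv, hn_uu, hHu' x hx, pdC_pdZ_eq_zero hU hHc hHu' x hx,
    pdC_pdZb_eq_zero hU hHc hHu' x hx, hξ.pdC_zero_m x hx, hξ.pdC_zero_conj_m x hx]
  ring

theorem contDiffOn_Kmm (hξ : IsResidualRadiationGauge U ξl ξn ξm) (hU : IsOpen U) :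
    ContDiffOn ℝ ∞ (Kmm ξm) U :=
  contDiffOn_const.mul (hξ.contDiffOn_m.conj.pdZ hU)

theorem contDiffOn_Knm (hξ : IsResidualRadiationGauge U ξl ξn ξm) (hU : IsOpen U)
    (hH : ContDiffOn ℝ ∞ H U) : ContDiffOn ℝ ∞ (Knm H ξl ξn ξm) U := by
  have := hξ.contDiffOn_l.ofReal; have := hH.ofReal; have := hH.ofReal.pdZ hU
  have := hξ.contDiffOn_n.ofReal.pdZ hU; have := hξ.contDiffOn_m.conj.pdC hU 0
  have := hξ.contDiffOn_m.conj.pdC hU 1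
  unfold Knm
  fun_prop

theorem pdC_zero_pdC_zero_Kmm_eq_zero (hξ : IsResidualRadiationGauge U ξl ξn ξm) (hU : IsOpen U) :
    ∀ x ∈ U, pdC 0 (pdC 0 (Kmm ξm)) x = 0 := fun x hx => by
  have hl := hξ.contDiffOn_l.ofReal
  rw [pdC_congr hU (hξ.pdC_zero_Kmm hU) hx,
    pdC_const_mul (((hl.pdZ hU).pdZ hU).differentiableAt_of_isOpen hU hx (by simp)),
    pdC_pdZ_eq_zero hU (hl.pdZ hU) (pdC_pdZ_eq_zero hU hl (hξ.pdC_zero_l_eq_zero hU)) x hx,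
    mul_zero]

theorem pdZb_pdC_zero_Kmm_eq_zero (hξ : IsResidualRadiationGauge U ξl ξn ξm) (hU : IsOpen U) :
    ∀ x ∈ U, pdZb (pdC 0 (Kmm ξm)) x = 0 := fun x hx => by
  have hl := hξ.contDiffOn_l.ofReal
  rw [pdZb_congr hU (hξ.pdC_zero_Kmm hU) hx,
    pdZb_const_mul (((hl.pdZ hU).pdZ hU).differentiableAt_of_isOpen hU hx (by simp)),
    ← pdZ_pdZb_comm hU (hl.pdZ hU) hx,
    pdZ_eq_zero_of_eq_zero_on hU (hξ.pdZb_pdZ_l_eq_zero hU) hx, mul_zero]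

theorem pdC_zero_pdZb_pdZb_Kmm_eq_zero (hξ : IsResidualRadiationGauge U ξl ξn ξm) (hU : IsOpen U) :
    ∀ x ∈ U, pdC 0 (pdZb (pdZb (Kmm ξm))) x = 0 := by
  have hK := hξ.contDiffOn_Kmm hU
  have hKb : ∀ x ∈ U, pdC 0 (pdZb (Kmm ξm)) x = 0 := fun x hx =>
    (pdC_pdZb_comm hU hK hx 0).trans (hξ.pdZb_pdC_zero_Kmm_eq_zero hU x hx)
  exact pdC_pdZb_eq_zero hU (hK.pdZb hU) hKb

theorem pdC_zero_pdC_zero_Knm_eq_zero (hξ : IsResidualRadiationGauge U ξl ξn ξm) (hU : IsOpen U)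
    (hH : ContDiffOn ℝ ∞ H U) (hHu : ∀ x ∈ U, pdR 0 H x = 0) :
    ∀ x ∈ U, pdC 0 (pdC 0 (Knm H ξl ξn ξm)) x = 0 := fun x hx => by
  have hl := hξ.contDiffOn_l.ofReal
  rw [pdC_congr hU (hξ.pdC_zero_Knm hU hH hHu) hx,
    pdC_const_mul (((hl.pdC hU 1).pdZ hU).differentiableAt_of_isOpen hU hx (by simp)),
    pdC_pdZ_eq_zero hU (hl.pdC hU 1) (pdC_pdC_eq_zero hU hl (hξ.pdC_zero_l_eq_zero hU) 1) x hx,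
    mul_zero]

theorem pdC_zero_pdZb_Knm_eq_zero (hξ : IsResidualRadiationGauge U ξl ξn ξm) (hU : IsOpen U)
    (hH : ContDiffOn ℝ ∞ H U) (hHu : ∀ x ∈ U, pdR 0 H x = 0) :
    ∀ x ∈ U, pdC 0 (pdZb (Knm H ξl ξn ξm)) x = 0 := fun x hx => by
  have hl := hξ.contDiffOn_l.ofReal
  have hl_vζ : ∀ y ∈ U,
      pdZ (pdC 1 (fun y => (ξl y : ℂ))) y = pdC 1 (pdZ (fun y => (ξl y : ℂ))) y :=
    fun _ hy => (pdC_pdZ_comm hU hl hy 1).symm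
  rw [pdC_pdZb_comm hU (hξ.contDiffOn_Knm hU hH) hx,
    pdZb_congr hU (hξ.pdC_zero_Knm hU hH hHu) hx,
    pdZb_const_mul (((hl.pdC hU 1).pdZ hU).differentiableAt_of_isOpen hU hx (by simp)),
    pdZb_congr hU hl_vζ hx, ← pdC_pdZb_comm hU (hl.pdZ hU) hx,
    pdC_eq_zero_of_eq_zero_on hU (hξ.pdZb_pdZ_l_eq_zero hU) hx, mul_zero]

theorem pdC_zero_pdC_zero_Knn_eq_zero (hξ : IsResidualRadiationGauge U ξl ξn ξm) (hU : IsOpen U)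
    (hH : ContDiffOn ℝ ∞ H U) (hHu : ∀ x ∈ U, pdR 0 H x = 0) :
    ∀ x ∈ U, pdC 0 (pdC 0 (Knn H ξl ξn ξm)) x = 0 := fun x hx => by
  have hl := hξ.contDiffOn_l.ofReal
  have hHc := hH.ofReal
  have hlu := hξ.pdC_zero_l_eq_zero hU
  have hHu' := pdC_ofReal_eq_zero hU hH hHu
  have d {f : V4 → ℂ} (hf : ContDiffOn ℝ ∞ f U) : DifferentiableAt ℝ f x :=
    hf.differentiableAt_of_isOpen hU hx (by simp)
  have := d ((hl.pdC hU 1).pdC hU 1); have := d (hl.pdZ hU); have := d (hl.pdZb hU)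
  have := d (hHc.pdZ hU); have := d (hHc.pdZb hU)
  rw [pdC_congr hU (hξ.pdC_zero_Knn hU hH hHu) hx]
  simp (disch := fun_prop) only [pdC_add, pdC_mul, pdC_const]
  rw [pdC_pdC_eq_zero hU (hl.pdC hU 1) (pdC_pdC_eq_zero hU hl hlu 1) 1 x hx,
    pdC_pdZ_eq_zero hU hl hlu x hx, pdC_pdZb_eq_zero hU hl hlu x hx,
    pdC_pdZ_eq_zero hU hHc hHu' x hx, pdC_pdZb_eq_zero hU hHc hHu' x hx]
  ring

end IsResidualRadiationGauge

theorem pdC_pdC_pdC_eq_zero_of_pdC_sub_pdZb {U : Set V4} {g₀ g₁ K K' : V4 → ℂ} {i : Fin 4}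
    (c : ℂ) (hU : IsOpen U) (hg₀ : ContDiffOn ℝ ∞ g₀ U) (hK' : ContDiffOn ℝ ∞ K' U)
    (h₀ : ∀ x ∈ U, pdC i g₀ x = K x) (h₁ : ∀ x ∈ U, pdC i g₁ x - pdZb g₀ x = c * K' x)
    (hK'_ii : ∀ x ∈ U, pdC i (pdC i K') x = 0) (hK_i : ∀ x ∈ U, pdZb (pdC i K) x = 0) :
    ∀ x ∈ U, pdC i (pdC i (pdC i g₁)) x = 0 := fun x hx => by
  have d {f : V4 → ℂ} (hf : ContDiffOn ℝ ∞ f U) {y : V4} (hy : y ∈ U) : DifferentiableAt ℝ f y :=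
    hf.differentiableAt_of_isOpen hU hy (by simp)
  have hg₁_i : ∀ y ∈ U, pdC i g₁ y = c * K' y + pdZb g₀ y := fun y hy => by
    linear_combination h₁ y hy
  have hg₁_ii : ∀ y ∈ U, pdC i (pdC i g₁) y = c * pdC i K' y + pdZb (pdC i g₀) y := fun y hy => by
    rw [pdC_congr hU hg₁_i hy, pdC_add ((d hK' hy).const_mul c) (d (hg₀.pdZb hU) hy),
      pdC_const_mul (d hK' hy), pdC_pdZb_comm hU hg₀ hy]
  rw [pdC_congr hU hg₁_ii hx, pdC_add ((d (hK'.pdC hU i) hx).const_mul c)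
      (d ((hg₀.pdC hU i).pdZb hU) hx), pdC_const_mul (d (hK'.pdC hU i) hx),
    pdC_pdZb_comm hU (hg₀.pdC hU i) hx, pdZb_congr hU (fun y hy => pdC_congr hU h₀ hy i) hx,
    hK'_ii x hx, hK_i x hx, mul_zero, add_zero]

theorem stmt17_general (U : Set V4) (hUopen : IsOpen U)
    (H : V4 → ℝ) (hH : ContDiffOn ℝ (⊤ : ℕ∞) H U)
    (hHu : ∀ x ∈ U, pdR 0 H x = 0)
    (ξl ξn : V4 → ℝ) (ξm : V4 → ℂ)
    (hl : ContDiffOn ℝ (⊤ : ℕ∞) ξl U) (hn : ContDiffOn ℝ (⊤ : ℕ∞) ξn U)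
    (hm : ContDiffOn ℝ (⊤ : ℕ∞) ξm U)
    (e1 : ∀ x ∈ U, pdR 0 ξl x = 0)
    (e2 : ∀ x ∈ U, pdC 0 (fun y => (starRingEnd ℂ) (ξm y)) x
      = pdZ (fun y => (ξl y : ℂ)) x)
    (e3 : ∀ x ∈ U, pdC 0 ξm x = pdZb (fun y => (ξl y : ℂ)) x)
    (e4 : ∀ x ∈ U, pdR 0 ξn x = -(pdR 1 ξl x))
    (e5 : ∀ x ∈ U, pdZb (fun y => (starRingEnd ℂ) (ξm y)) x + pdZ ξm x = 0) :
    ((∀ x ∈ U, pdC 0 (pdC 0 (Knn H ξl ξn ξm)) x = 0) ∧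
     (∀ x ∈ U, pdC 0 (pdZb (Knm H ξl ξn ξm)) x = 0) ∧
     (∀ x ∈ U, pdC 0 (pdZb (pdZb (Kmm ξm))) x = 0)) ∧
    (∀ g0 g1 : V4 → ℂ,
      ContDiffOn ℝ (⊤ : ℕ∞) g0 U → ContDiffOn ℝ (⊤ : ℕ∞) g1 U →
      (∀ x ∈ U, pdC 0 g0 x = Kmm ξm x) →
      (∀ x ∈ U, pdC 0 g1 x - pdZb g0 x = 2 * Knm H ξl ξn ξm x) →
      (∀ x ∈ U, pdZb g1 x = -((1/2) * Knn H ξl ξn ξm x + Complex.I * etaK ξm x)) →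
      (∀ x ∈ U, pdC 0 (pdC 0 (pdC 0 g0)) x = 0) ∧
      (∀ x ∈ U, pdZb (pdC 0 (pdC 0 g0)) x = 0) ∧
      (∀ x ∈ U, pdC 0 (pdC 0 (pdC 0 g1)) x = 0)) := by
  have hξ : IsResidualRadiationGauge U ξl ξn ξm := ⟨hl, hn, hm, e1, e2, e3, e4, e5⟩
  refine ⟨⟨hξ.pdC_zero_pdC_zero_Knn_eq_zero hUopen hH hHu,
    hξ.pdC_zero_pdZb_Knm_eq_zero hUopen hH hHu, hξ.pdC_zero_pdZb_pdZb_Kmm_eq_zero hUopen⟩,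
    fun g0 g1 hg0 _ hg0_u hg1_u _ => ?_⟩
  have hg0_uu : ∀ x ∈ U, pdC 0 (pdC 0 g0) x = pdC 0 (Kmm ξm) x := fun x hx =>
    pdC_congr hUopen hg0_u hx 0
  exact ⟨fun x hx =>
      (pdC_congr hUopen hg0_uu hx 0).trans (hξ.pdC_zero_pdC_zero_Kmm_eq_zero hUopen x hx),
    fun x hx => (pdZb_congr hUopen hg0_uu hx).trans (hξ.pdZb_pdC_zero_Kmm_eq_zero hUopen x hx),
    pdC_pdC_pdC_eq_zero_of_pdC_sub_pdZb 2 hUopen hg0 (hξ.contDiffOn_Knm hUopen hH) hg0_u hg1_u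
      (hξ.pdC_zero_pdC_zero_Knm_eq_zero hUopen hH hHu) (hξ.pdZb_pdC_zero_Kmm_eq_zero hUopen)⟩

/-- Structure of the gauge-operator components of a residual radiation-gauge
vector on a pp-wave, and the resulting constraints on its spinor potential
(g₀, g₁). -/
theorem stmt17 (U : Set V4) (hUopen : IsOpen U) (hUconv : Convex ℝ U)
    (H : V4 → ℝ) (hH : ContDiffOn ℝ (⊤ : ℕ∞) H U)
    (hHu : ∀ x ∈ U, pdR 0 H x = 0)
    (ξl ξn : V4 → ℝ) (ξm : V4 → ℂ)
    (hl : ContDiffOn ℝ (⊤ : ℕ∞) ξl U) (hn : ContDiffOn ℝ (⊤ : ℕ∞) ξn U)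
    (hm : ContDiffOn ℝ (⊤ : ℕ∞) ξm U)
    (e1 : ∀ x ∈ U, pdR 0 ξl x = 0)
    (e2 : ∀ x ∈ U, pdC 0 (fun y => (starRingEnd ℂ) (ξm y)) x
      = pdZ (fun y => (ξl y : ℂ)) x)
    (e3 : ∀ x ∈ U, pdC 0 ξm x = pdZb (fun y => (ξl y : ℂ)) x)
    (e4 : ∀ x ∈ U, pdR 0 ξn x = -(pdR 1 ξl x))
    (e5 : ∀ x ∈ U, pdZb (fun y => (starRingEnd ℂ) (ξm y)) x + pdZ ξm x = 0) :
    ((∀ x ∈ U, pdC 0 (pdC 0 (Knn H ξl ξn ξm)) x = 0) ∧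
     (∀ x ∈ U, pdC 0 (pdZb (Knm H ξl ξn ξm)) x = 0) ∧
     (∀ x ∈ U, pdC 0 (pdZb (pdZb (Kmm ξm))) x = 0)) ∧
    (∀ g0 g1 : V4 → ℂ,
      ContDiffOn ℝ (⊤ : ℕ∞) g0 U → ContDiffOn ℝ (⊤ : ℕ∞) g1 U →
      (∀ x ∈ U, pdC 0 g0 x = Kmm ξm x) →
      (∀ x ∈ U, pdC 0 g1 x - pdZb g0 x = 2 * Knm H ξl ξn ξm x) →
      (∀ x ∈ U, pdZb g1 x = -((1/2) * Knn H ξl ξn ξm x + Complex.I * etaK ξm x)) →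
      (∀ x ∈ U, pdC 0 (pdC 0 (pdC 0 g0)) x = 0) ∧
      (∀ x ∈ U, pdZb (pdC 0 (pdC 0 g0)) x = 0) ∧
      (∀ x ∈ U, pdC 0 (pdC 0 (pdC 0 g1)) x = 0)) :=
  stmt17_general U hUopen H hH hHu ξl ξn ξm hl hn hm e1 e2 e3 e4 e5

end
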